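/- arXiv:2408.16189 — 6 statements merged into one kernel-verified Lean document; each statement's English description precedes it below -/
import Mathlib

section
/- If ε₁ > ε_{P,Q} (the pivotal value), then every h ∈ H satisfies E_P(h; H_Q(ε₁)) = E_P(h), i.e., inf_{h' ∈ H_Q(ε₁)} R_P(h') = inf_{h' ∈ H} R_P(h'). -/
noncomputable def excess {H : Type*} (R : H → ℝ) (h : H) : ℝ :=
  R h - sInf (Set.range R)

/-- Excess risk w.r.t. a subclass `H₀ ⊆ H`. -/
noncomputable def excessOn {H : Type*} (R : H → ℝ) (S : Set H) (h : H) : ℝ :=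
  R h - sInf (R '' S)

def cset {H : Type*} (R : H → ℝ) (ε : ℝ) : Set H :=
  {h | excess R h ≤ ε}

noncomputable def pivot {H : Type*} (RP RQ : H → ℝ) : EReal :=
  ⨆ (ε : ℝ) (_ : 0 < ε), sInf ((fun h => (excess RQ h : EReal)) '' cset RP ε)

/-! A set `S` that meets every near-optimal set `cset R ε` of a bounded-below `R` has the same
infimum of `R` as the whole class. Below the pivot, `cset RQ ε₁` is such a set for `RP`: every
`cset RP ε` contains some `h` with `excess RQ h < ε₁`. -/

section

variable {H : Type*}

theorem csInf_image_eq_csInf_range_of_inter_cset_nonempty {R : H → ℝ} {S : Set H}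
    (hR : BddBelow (Set.range R)) (hS : ∀ ε > 0, (S ∩ cset R ε).Nonempty) :
    sInf (R '' S) = sInf (Set.range R) := by
  obtain ⟨h₀, h₀S, -⟩ := hS 1 one_pos
  refine csInf_eq_of_forall_ge_of_forall_gt_exists_lt ⟨R h₀, h₀, h₀S, rfl⟩
    (fun _ ⟨h, _, hRh⟩ => hRh ▸ csInf_le hR ⟨h, rfl⟩) fun w hw => ?_
  obtain ⟨h, hS, hε⟩ := hS ((w - sInf (Set.range R)) / 2) (by linarith)
  have hε' : R h - sInf (Set.range R) ≤ (w - sInf (Set.range R)) / 2 := hε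
  exact ⟨R h, ⟨h, hS, rfl⟩, by linarith⟩

theorem inter_cset_nonempty_of_pivot_lt {RP RQ : H → ℝ} {ε₁ ε : ℝ}
    (hε₁ : pivot RP RQ < ε₁) (hε : 0 < ε) : (cset RQ ε₁ ∩ cset RP ε).Nonempty := by
  have hlt : sInf ((fun h => (excess RQ h : EReal)) '' cset RP ε) < ε₁ :=
    (le_iSup₂ (f := fun (ε : ℝ) (_ : 0 < ε) =>
      sInf ((fun h => (excess RQ h : EReal)) '' cset RP ε)) ε hε).trans_lt hε₁
  obtain ⟨_, ⟨h, hP, rfl⟩, hQ⟩ := sInf_lt_iff.mp hlt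
  exact ⟨h, (EReal.coe_lt_coe_iff.mp hQ).le, hP⟩

end

theorem excessOn_eq_excess_of_pivot_lt_general {H : Type*} (RP RQ : H → ℝ)
    (hRP : ∀ h, 0 ≤ RP h)
    (ε₁ : ℝ) (hε₁ : pivot RP RQ < (ε₁ : EReal)) :
    (∀ h, excessOn RP (cset RQ ε₁) h = excess RP h) ∧
      sInf (RP '' cset RQ ε₁) = sInf (Set.range RP) := by
  have hinf : sInf (RP '' cset RQ ε₁) = sInf (Set.range RP) :=
    csInf_image_eq_csInf_range_of_inter_cset_nonempty ⟨0, Set.forall_mem_range.mpr hRP⟩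
      fun _ hε => inter_cset_nonempty_of_pivot_lt hε₁ hε
  exact ⟨fun h => by rw [excessOn, hinf, excess], hinf⟩

/-- if `ε₁ > ε_{P,Q}` then for every `h`,
`E_P(h; H_Q(ε₁)) = E_P(h)`, i.e. `inf_{h' ∈ H_Q(ε₁)} R_P(h') = inf_{h' ∈ H} R_P(h')`. -/
theorem excessOn_eq_excess_of_pivot_lt {H : Type*} [Nonempty H] (RP RQ : H → ℝ)
    (hRP : ∀ h, 0 ≤ RP h) (hRQ : ∀ h, 0 ≤ RQ h)
    (ε₁ : ℝ) (hε₁ : pivot RP RQ < (ε₁ : EReal)) :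
    (∀ h, excessOn RP (cset RQ ε₁) h = excess RP h) ∧
      sInf (RP '' cset RQ ε₁) = sInf (Set.range RP) :=
  excessOn_eq_excess_of_pivot_lt_general RP RQ hRP ε₁ hε₁
end

section
/- The strong modulus of transfer δ(ε₁,ε₂) is non-decreasing in both arguments: for all 0 < ε₁ ≤ ε₁' and 0 < ε₂ ≤ ε₂', δ(ε₁,ε₂) ≤ δ(ε₁',ε₂'). -/
/-- Weak modulus of transfer `δ(ε) = sup {E_Q(h) : E_P(h) ≤ ε}` (valued in `(-∞,∞]`). -/
noncomputable def wmod {H : Type*} (RP RQ : H → ℝ) (ε : ℝ) : EReal :=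
  sSup ((fun h => (excess RQ h : EReal)) '' cset RP ε)

/-- Strong modulus of transfer
`δ(ε₁,ε₂) = sup {E_Q(h) : h ∈ H_Q(ε₁), E_P(h;H_Q(ε₁)) ≤ ε₂}`. -/
noncomputable def smod {H : Type*} (RP RQ : H → ℝ) (ε₁ ε₂ : ℝ) : EReal :=
  sSup ((fun h => (excess RQ h : EReal)) ''
    {h | h ∈ cset RQ ε₁ ∧ excessOn RP (cset RQ ε₁) h ≤ ε₂})

open Set

section

variable {H : Type*}

theorem cset_mono (R : H → ℝ) : Monotone (cset R) :=
  fun _ _ hε _ hh => le_trans hh hε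

theorem exists_excessOn_le_of_subset {f : H → ℝ} {S T : Set H} (hST : S ⊆ T) {ε : ℝ}
    (hε : 0 < ε) {x : H} (hxS : x ∈ S) (hx : excessOn f S x ≤ ε) :
    ∃ y ∈ T, excessOn f T y ≤ ε ∧ (y = x ∨ y ∉ S) := by
  by_cases hxT : excessOn f T x ≤ ε
  · exact ⟨x, hST hxS, hxT, Or.inl rfl⟩
  unfold excessOn at hx hxT
  have hinf : sInf (f '' T) < sInf (f '' S) := by linarith
  -- otherwise both infima are the junk value `0` of `sInf` on sets unbounded below
  have hbdd : BddBelow (f '' S) := by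
    by_contra hS
    have hT : ¬BddBelow (f '' T) := fun hT => hS (hT.mono (image_mono hST))
    rw [Real.sInf_of_not_bddBelow hS, Real.sInf_of_not_bddBelow hT] at hinf
    exact hinf.false
  obtain ⟨_, ⟨y, hyT, rfl⟩, hy⟩ := exists_lt_of_csInf_lt ((nonempty_of_mem (hST hxS)).image f)
    (lt_min hinf (lt_add_of_pos_right _ hε))
  refine ⟨y, hyT, ?_, Or.inr fun hyS => ?_⟩
  · unfold excessOn
    linarith [hy.trans_le (min_le_right _ _)]
  · exact (csInf_le hbdd (mem_image_of_mem f hyS)).not_gt (hy.trans_le (min_le_left _ _))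

theorem smod_mono_right (RP RQ : H → ℝ) (ε₁ : ℝ) : Monotone (smod RP RQ ε₁) :=
  fun _ _ hε => sSup_le_sSup (image_mono fun _ hh => ⟨hh.1, hh.2.trans hε⟩)

theorem smod_le_smod_of_le_left (RP RQ : H → ℝ) {ε₁ ε₁' ε₂ : ℝ} (hε₁ : ε₁ ≤ ε₁')
    (hε₂ : 0 < ε₂) : smod RP RQ ε₁ ε₂ ≤ smod RP RQ ε₁' ε₂ := by
  refine sSup_le ?_
  rintro _ ⟨x, ⟨hxQ, hxP⟩, rfl⟩
  obtain ⟨y, hyQ, hyP, rfl | hy⟩ := exists_excessOn_le_of_subset (cset_mono RQ hε₁) hε₂ hxQ hxP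
  · exact le_sSup ⟨y, ⟨hyQ, hyP⟩, rfl⟩
  · refine le_sSup_of_le ⟨y, ⟨hyQ, hyP⟩, rfl⟩ ?_
    exact EReal.coe_le_coe_iff.mpr (le_trans hxQ (not_le.mp hy).le)

end

theorem smod_monotone_general {H : Type*} (RP RQ : H → ℝ)
    (ε₁ ε₁' ε₂ ε₂' : ℝ) (h₁' : ε₁ ≤ ε₁')
    (h₂ : 0 < ε₂) (h₂' : ε₂ ≤ ε₂') :
    smod RP RQ ε₁ ε₂ ≤ smod RP RQ ε₁' ε₂' :=
  (smod_mono_right RP RQ ε₁ h₂').trans (smod_le_smod_of_le_left RP RQ h₁' (h₂.trans_le h₂'))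

/-- the strong modulus is non-decreasing in both arguments. -/
theorem smod_monotone {H : Type*} [Nonempty H] (RP RQ : H → ℝ)
    (hRP : ∀ h, 0 ≤ RP h) (hRQ : ∀ h, 0 ≤ RQ h)
    (ε₁ ε₁' ε₂ ε₂' : ℝ) (h₁ : 0 < ε₁) (h₁' : ε₁ ≤ ε₁')
    (h₂ : 0 < ε₂) (h₂' : ε₂ ≤ ε₂') :
    smod RP RQ ε₁ ε₂ ≤ smod RP RQ ε₁' ε₂' :=
  smod_monotone_general RP RQ ε₁ ε₁' ε₂ ε₂' h₁' h₂ h₂'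
end

section
/- In linear regression with squared loss where E_P[Y|X] = w_P*ᵀX and E_Q[Y|X] = w_Q*ᵀX may differ, for every w ∈ ℝᵈ: E_Q(h_w) ≤ 2λ_max(Σ_P^{-1}Σ_Q)·‖w - w_P*‖²_{Σ_P} + 2E_Q(h_{w_P*}). Consequently δ(ε) ≤ 2λ_max(Σ_P^{-1}Σ_Q)·ε + 2E_Q(h_{w_P*}) for all ε > 0. -/
open Matrix

noncomputable def lamMax {d : ℕ} (A : Matrix (Fin d) (Fin d) ℝ) : ℝ :=
  sSup (spectrum ℝ A)

/-- Squared `Σ`-norm `‖v‖²_Σ = vᵀ Σ v`. -/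
def quadForm {d : ℕ} (A : Matrix (Fin d) (Fin d) ℝ) (v : Fin d → ℝ) : ℝ :=
  v ⬝ᵥ A.mulVec v

/-!
Write `Σ_P = S²` with `S = √Σ_P`. Then `Σ_P⁻¹ Σ_Q = S⁻¹ (S⁻¹ Σ_Q S⁻¹) S` is similar to the
symmetric matrix `S⁻¹ Σ_Q S⁻¹`, which is therefore `≤ λ_max(Σ_P⁻¹ Σ_Q) • 1` in the Loewner order;
conjugating by `S` gives `Σ_Q ≤ λ_max(Σ_P⁻¹ Σ_Q) • Σ_P`. The pointwise bound follows by splitting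
`w - w_Q* = (w - w_P*) + (w_P* - w_Q*)` and using `‖a + b‖² ≤ 2‖a‖² + 2‖b‖²`, and the bound on the
modulus by taking the supremum over the sublevel set, which contains `w_P*`.
-/

open scoped MatrixOrder

namespace Matrix

variable {n : Type*} [Fintype n] [DecidableEq n] {A B : Matrix n n ℝ}

lemma PosDef.spectrum_inv_mul_eq (hA : A.PosDef) (B : Matrix n n ℝ) :
    spectrum ℝ (A⁻¹ * B) = spectrum ℝ ((CFC.sqrt A)⁻¹ * B * (CFC.sqrt A)⁻¹) := by
  have hS : IsUnit (CFC.sqrt A) := (CFC.isUnit_sqrt_iff A hA.posSemidef.nonneg).mpr hA.isUnit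
  conv_rhs => rw [← spectrum.units_conjugate' (u := hS.unit)]
  conv_lhs => rw [← CFC.sqrt_mul_sqrt_self A hA.posSemidef.nonneg, Matrix.mul_inv_rev]
  rw [coe_units_inv, IsUnit.unit_spec]
  simp only [Matrix.mul_assoc, nonsing_inv_mul _ ((isUnit_iff_isUnit_det _).mp hS),
    Matrix.mul_one]

lemma PosDef.sSup_spectrum_inv_mul_nonneg (hA : A.PosDef) (hB : B.PosSemidef) :
    0 ≤ sSup (spectrum ℝ (A⁻¹ * B)) := by
  have hS : IsSelfAdjoint (CFC.sqrt A)⁻¹ :=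
    (CFC.sqrt_nonneg A).posSemidef.isHermitian.inv.isSelfAdjoint
  have hM : 0 ≤ (CFC.sqrt A)⁻¹ * B * (CFC.sqrt A)⁻¹ := hS.conjugate_nonneg hB.nonneg
  rw [hA.spectrum_inv_mul_eq]
  exact Real.sSup_nonneg fun x hx => spectrum_nonneg_of_nonneg hM hx

lemma PosDef.le_sSup_spectrum_inv_mul_smul (hA : A.PosDef) (hB : B.IsHermitian) :
    B ≤ sSup (spectrum ℝ (A⁻¹ * B)) • A := by
  set S := CFC.sqrt A
  have hSA : S * S = A := CFC.sqrt_mul_sqrt_self A hA.posSemidef.nonneg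
  have hdet : IsUnit S.det := (isUnit_iff_isUnit_det S).mp
    ((CFC.isUnit_sqrt_iff A hA.posSemidef.nonneg).mpr hA.isUnit)
  have hS_herm : S.IsHermitian := (CFC.sqrt_nonneg A).posSemidef.isHermitian
  have hM_sa : IsSelfAdjoint (S⁻¹ * B * S⁻¹) :=
    hB.isSelfAdjoint.conjugate_self hS_herm.inv.isSelfAdjoint
  have hM : S⁻¹ * B * S⁻¹ ≤ algebraMap ℝ _ (sSup (spectrum ℝ (A⁻¹ * B))) := by
    refine le_algebraMap_of_spectrum_le (fun x hx => ?_) hM_sa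
    rw [hA.spectrum_inv_mul_eq]
    exact le_csSup finite_real_spectrum.bddAbove hx
  convert hS_herm.isSelfAdjoint.conjugate_le_conjugate hM using 1
  · rw [Matrix.mul_assoc, Matrix.mul_assoc, nonsing_inv_mul _ hdet, Matrix.mul_one,
      mul_nonsing_inv_cancel_left _ _ hdet]
  · rw [Algebra.algebraMap_eq_smul_one, Matrix.mul_smul, Matrix.mul_one, Matrix.smul_mul, hSA]

end Matrix

section quadForm

variable {d : ℕ} {A B : Matrix (Fin d) (Fin d) ℝ}

lemma quadForm_sub (A B : Matrix (Fin d) (Fin d) ℝ) (v : Fin d → ℝ) :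
    quadForm (A - B) v = quadForm A v - quadForm B v := by
  simp only [quadForm, sub_mulVec, dotProduct_sub]

lemma quadForm_smul (c : ℝ) (A : Matrix (Fin d) (Fin d) ℝ) (v : Fin d → ℝ) :
    quadForm (c • A) v = c * quadForm A v := by
  simp only [quadForm, smul_mulVec, dotProduct_smul, smul_eq_mul]

lemma Matrix.PosSemidef.quadForm_nonneg (hA : A.PosSemidef) (v : Fin d → ℝ) :
    0 ≤ quadForm A v := by
  simpa only [quadForm, star_trivial] using hA.dotProduct_mulVec_nonneg v

lemma quadForm_mono (h : A ≤ B) (v : Fin d → ℝ) : quadForm A v ≤ quadForm B v :=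
  sub_nonneg.mp (quadForm_sub B A v ▸ h.quadForm_nonneg v)

lemma quadForm_add_add_quadForm_sub (A : Matrix (Fin d) (Fin d) ℝ) (u v : Fin d → ℝ) :
    quadForm A (u + v) + quadForm A (u - v) = 2 * quadForm A u + 2 * quadForm A v := by
  simp only [quadForm, mulVec_add, mulVec_sub, dotProduct_add, dotProduct_sub, add_dotProduct,
    sub_dotProduct]
  ring

lemma Matrix.PosSemidef.quadForm_add_le (hA : A.PosSemidef) (u v : Fin d → ℝ) :
    quadForm A (u + v) ≤ 2 * quadForm A u + 2 * quadForm A v := by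
  linarith [quadForm_add_add_quadForm_sub A u v, hA.quadForm_nonneg (u - v)]

lemma quadForm_le_lamMax_mul (hA : A.PosDef) (hB : B.IsHermitian) (v : Fin d → ℝ) :
    quadForm B v ≤ lamMax (A⁻¹ * B) * quadForm A v :=
  quadForm_smul _ A v ▸ quadForm_mono (hA.le_sSup_spectrum_inv_mul_smul hB) v

end quadForm

theorem linreg_shifted_minimizers_general {d : ℕ}
    (SP SQ : Matrix (Fin d) (Fin d) ℝ)
    (hP : SP.PosDef) (hQ : SQ.PosSemidef) (wP wQ : Fin d → ℝ) :
    (∀ w : Fin d → ℝ,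
        quadForm SQ (w - wQ) ≤
          2 * lamMax (SP⁻¹ * SQ) * quadForm SP (w - wP)
            + 2 * quadForm SQ (wP - wQ))
    ∧ (∀ ε : ℝ, 0 < ε →
        sSup {r : ℝ | ∃ w : Fin d → ℝ,
            quadForm SP (w - wP) ≤ ε ∧ r = quadForm SQ (w - wQ)} ≤
          2 * lamMax (SP⁻¹ * SQ) * ε + 2 * quadForm SQ (wP - wQ)) := by
  have hlam : 0 ≤ lamMax (SP⁻¹ * SQ) := hP.sSup_spectrum_inv_mul_nonneg hQ
  have bound (w : Fin d → ℝ) : quadForm SQ (w - wQ) ≤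
      2 * lamMax (SP⁻¹ * SQ) * quadForm SP (w - wP) + 2 * quadForm SQ (wP - wQ) :=
    calc quadForm SQ (w - wQ) = quadForm SQ ((w - wP) + (wP - wQ)) := by
          rw [sub_add_sub_cancel]
      _ ≤ 2 * quadForm SQ (w - wP) + 2 * quadForm SQ (wP - wQ) := hQ.quadForm_add_le _ _
      _ ≤ 2 * (lamMax (SP⁻¹ * SQ) * quadForm SP (w - wP)) + 2 * quadForm SQ (wP - wQ) := by
          gcongr
          exact quadForm_le_lamMax_mul hP hQ.isHermitian _
      _ = _ := by ring
  refine ⟨bound, fun ε hε => csSup_le ⟨_, wP, by simpa [quadForm] using hε.le, rfl⟩ ?_⟩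
  rintro _ ⟨w, hw, rfl⟩
  exact (bound w).trans (by gcongr)

/-- linear regression with possibly different risk minimizers
`w_P*`, `w_Q*`. With `E_P(h_w) = ‖w-w_P*‖²_{Σ_P}` and `E_Q(h_w) = ‖w-w_Q*‖²_{Σ_Q}`:
`E_Q(h_w) ≤ 2 λ_max(Σ_P⁻¹Σ_Q) ‖w-w_P*‖²_{Σ_P} + 2 E_Q(h_{w_P*})`, and hence
`δ(ε) ≤ 2 λ_max(Σ_P⁻¹Σ_Q) ε + 2 E_Q(h_{w_P*})`. -/
theorem linreg_shifted_minimizers {d : ℕ} [NeZero d]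
    (SP SQ : Matrix (Fin d) (Fin d) ℝ)
    (hP : SP.PosDef) (hQ : SQ.PosSemidef) (wP wQ : Fin d → ℝ) :
    (∀ w : Fin d → ℝ,
        quadForm SQ (w - wQ) ≤
          2 * lamMax (SP⁻¹ * SQ) * quadForm SP (w - wP)
            + 2 * quadForm SQ (wP - wQ))
    ∧ (∀ ε : ℝ, 0 < ε →
        sSup {r : ℝ | ∃ w : Fin d → ℝ,
            quadForm SP (w - wP) ≤ ε ∧ r = quadForm SQ (w - wQ)} ≤
          2 * lamMax (SP⁻¹ * SQ) * ε + 2 * quadForm SQ (wP - wQ)) :=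
  linreg_shifted_minimizers_general SP SQ hP hQ wP wQ
end

section
/- Let ĥ be the output of the algorithm that returns any h ∈ Ĥ_Q ∩ Ĥ_P if this intersection is nonempty, and otherwise returns the Q-sample ERM ĥ_Q. If Ĥ_Q is an (ε_Q, τ)-weak confidence set under Q and Ĥ_P is an (ε_P, τ)-weak confidence set under P, then with probability at least 1 - 2τ: E_Q(ĥ) ≤ min{ε_Q, δ(ε_P)}, where δ is the weak modulus of transfer. -/
/-!
If the two confidence sets meet, the output lies in `H_Q(ε_Q) ∩ H_P(ε_P)`. Otherwise the
`P`-ERM `ĥ_P` lies in `Ĥ_P ⊆ H_P(ε_P)` but outside `Ĥ_Q ⊇ H_Q(ε̂_Q)`, so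
`E_Q(ĥ_Q) < ε̂_Q < E_Q(ĥ_P) ≤ δ(ε_P)`.
-/

section Transfer

variable {H : Type*}

theorem excess_le_wmod_of_mem_cset {RP RQ : H → ℝ} {ε : ℝ} {h : H} (hh : h ∈ cset RP ε) :
    (excess RQ h : EReal) ≤ wmod RP RQ ε :=
  le_sSup ⟨h, hh, rfl⟩

theorem excess_lt_excess_of_cset_subset {R : H → ℝ} {S : Set H} {ε : ℝ} {g h : H}
    (hg : excess R g < ε) (hS : cset R ε ⊆ S) (hh : h ∉ S) : excess R g < excess R h :=
  hg.trans (not_le.mp fun hle => hh (hS hle))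

end Transfer

theorem weak_adaptive_transfer_general {H : Type*} (RP RQ : H → ℝ)
    (εQ εP : ℝ)
    (HQhat HPhat : Set H) (hQerm hPerm : H)
    -- weak confidence set event under Q:
    (hQi : ∃ εhatQ : ℝ, excess RQ hQerm < εhatQ ∧ cset RQ εhatQ ⊆ HQhat)
    (hQii : HQhat ⊆ cset RQ εQ)
    -- weak confidence set event under P:
    (hPi : ∃ εhatP : ℝ, excess RP hPerm < εhatP ∧ cset RP εhatP ⊆ HPhat)
    (hPii : HPhat ⊆ cset RP εP)
    -- the algorithm's output:
    (hhat : H)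
    (halg : ((HQhat ∩ HPhat).Nonempty → hhat ∈ HQhat ∩ HPhat)
      ∧ (¬ (HQhat ∩ HPhat).Nonempty → hhat = hQerm)) :
    (excess RQ hhat : EReal) ≤ min (εQ : EReal) (wmod RP RQ εP) := by
  obtain ⟨εhatQ, hQlt, hQsub⟩ := hQi
  obtain ⟨εhatP, hPlt, hPsub⟩ := hPi
  by_cases hne : (HQhat ∩ HPhat).Nonempty
  · obtain ⟨hQ, hP⟩ := halg.1 hne
    exact le_min (EReal.coe_le_coe_iff.mpr (hQii hQ)) (excess_le_wmod_of_mem_cset (hPii hP))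
  · obtain rfl : hhat = hQerm := halg.2 hne
    have hPmem : hPerm ∈ HPhat := hPsub hPlt.le
    have hQerm_lt : excess RQ hhat < excess RQ hPerm :=
      excess_lt_excess_of_cset_subset hQlt hQsub fun hQ => hne ⟨hPerm, hQ, hPmem⟩
    refine le_min (EReal.coe_le_coe_iff.mpr (hQii (hQsub hQlt.le))) ?_
    exact (EReal.coe_le_coe_iff.mpr hQerm_lt.le).trans
      (excess_le_wmod_of_mem_cset (hPii hPmem))

/-- deterministic core of Theorem `single-delta`: on the intersection of
the two weak-confidence-set events, the output `ĥ` of Algorithm 1 satisfies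
`E_Q(ĥ) ≤ min {ε_Q, δ(ε_P)}`. -/
theorem weak_adaptive_transfer {H : Type*} [Nonempty H] (RP RQ : H → ℝ)
    (hRP : ∀ h, 0 ≤ RP h) (hRQ : ∀ h, 0 ≤ RQ h)
    (εQ εP : ℝ) (hεQ : 0 < εQ) (hεP : 0 < εP)
    (HQhat HPhat : Set H) (hQerm hPerm : H)
    -- weak confidence set event under Q:
    (hQi : ∃ εhatQ : ℝ, excess RQ hQerm < εhatQ ∧ cset RQ εhatQ ⊆ HQhat)
    (hQii : HQhat ⊆ cset RQ εQ)
    -- weak confidence set event under P: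
    (hPi : ∃ εhatP : ℝ, excess RP hPerm < εhatP ∧ cset RP εhatP ⊆ HPhat)
    (hPii : HPhat ⊆ cset RP εP)
    -- the algorithm's output:
    (hhat : H)
    (halg : ((HQhat ∩ HPhat).Nonempty → hhat ∈ HQhat ∩ HPhat)
      ∧ (¬ (HQhat ∩ HPhat).Nonempty → hhat = hQerm)) :
    (excess RQ hhat : EReal) ≤ min (εQ : EReal) (wmod RP RQ εP) :=
  weak_adaptive_transfer_general RP RQ εQ εP HQhat HPhat hQerm hPerm hQi hQii hPi hPii hhat halg
end

section
/- Let Ĥ_Q^♯ ⊃ Ĥ_Q^♭ be (ε_Q, τ, C^♯)- and (ε_Q/C^♯, τ, C^♭)-strong confidence sets under Q, and Ĥ_P an (ε_P, τ)-weak confidence set under P. Let ĥ be the output of the algorithm returning any h ∈ Ĥ_Q^♯ ∩ Ĥ_P if nonempty, else ĥ_{P,Q} = argmin_{h ∈ Ĥ_Q^♭} R̂_P(h). Let ε̃_P = ε̃_P(Ĥ_Q^♭) be the (1-τ)-confidence rate of ERM over Ĥ_Q^♭ under P. Then with probability at least 1-4τ: E_Q(ĥ) ≤ δ(ε_Q,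 ε_P) if ε_Q > ε_{P,Q} or Ĥ_Q^♯ ∩ Ĥ_P ≠ ∅, and E_Q(ĥ) ≤ C^♭ · δ(ε_Q/C^♯, ε̃_P) otherwise. -/
/-! If the two confidence sets `Ĥ_Q^♯` and `Ĥ_P` meet, the output has `Q`-excess `≤ ε_Q` and
`P`-excess `≤ ε_P`, so it is admissible in `δ(ε_Q, ε_P)`. If they do not meet but
`ε_Q > ε_{P,Q}`, some `h₀` of small `P`-excess (hence in `Ĥ_P`) has `Q`-excess `< ε_Q`; it lies
outside `Ĥ_Q^♯ ⊇ H_Q(ε_Q/C^♯)`, so it is admissible in `δ(ε_Q, ε_P)` and beats the output, whose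
`Q`-excess is `≤ ε_Q/C^♯`. Otherwise the output is the ERM `ĥ` over `Ĥ_Q^♭ ⊆ H_Q(ε)`,
`ε = ε_Q/C^♯`: either the infimum of `R_P` over `H_Q(ε)` equals the one over `Ĥ_Q^♭` and `ĥ`
itself is admissible in `δ(ε, ε̃_P)`, or a near-minimiser over `H_Q(ε)` misses
`Ĥ_Q^♭ ⊇ H_Q(ε/C^♭)`, is admissible, and has `Q`-excess `> ε/C^♭ ≥ E_Q(ĥ)/C^♭`. -/

section Transfer

variable {H : Type*}

lemma excess_nonneg {R : H → ℝ} (hR : BddBelow (Set.range R)) (h : H) : 0 ≤ excess R h :=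
  sub_nonneg.2 (csInf_le hR ⟨h, rfl⟩)

lemma excessOn_le_excess {R : H → ℝ} (hR : BddBelow (Set.range R)) {S : Set H}
    (hS : S.Nonempty) (h : H) : excessOn R S h ≤ excess R h :=
  sub_le_sub_left (le_csInf (hS.image R) (Set.forall_mem_image.2 fun x _ => csInf_le hR ⟨x, rfl⟩)) _

lemma excessOn_le_or_exists_notMem_excessOn_le {R : H → ℝ} {S T : Set H} {η : ℝ}
    (hR : BddBelow (R '' T)) (hST : S ⊆ T) {h : H} (hS : h ∈ S) (hh : excessOn R S h ≤ η)
    (hη : 0 < η) : excessOn R T h ≤ η ∨ ∃ h₀ ∈ T, h₀ ∉ S ∧ excessOn R T h₀ ≤ η := by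
  rcases le_or_gt (sInf (R '' S)) (sInf (R '' T)) with hle | hlt
  · exact Or.inl ((sub_le_sub_left hle _).trans hh)
  have hT : (R '' T).Nonempty := ⟨R h, h, hST hS, rfl⟩
  obtain ⟨_, ⟨h₀, hT₀, rfl⟩, hlt₀⟩ :=
    (csInf_lt_iff hR hT).1 (lt_min hlt (lt_add_of_pos_right (sInf (R '' T)) hη))
  obtain ⟨hltS, hltT⟩ := lt_min_iff.1 hlt₀
  refine Or.inr ⟨h₀, hT₀, fun hS₀ => ?_, ?_⟩
  · exact hltS.not_ge (csInf_le (hR.mono (Set.image_mono hST)) ⟨h₀, hS₀, rfl⟩)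
  · exact (sub_lt_iff_lt_add'.2 hltT).le

lemma exists_excess_le_excess_lt_of_pivot_lt {RP RQ : H → ℝ} {ε η : ℝ}
    (hpiv : pivot RP RQ < ε) (hη : 0 < η) : ∃ h, excess RP h ≤ η ∧ excess RQ h < ε := by
  have hlt : sInf ((fun h => (excess RQ h : EReal)) '' cset RP η) < ε :=
    (le_iSup₂ (f := fun (ε : ℝ) (_ : 0 < ε) =>
      sInf ((fun h => (excess RQ h : EReal)) '' cset RP ε)) η hη).trans_lt hpiv
  obtain ⟨_, ⟨h, hP, rfl⟩, hQ⟩ := sInf_lt_iff.1 hlt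
  exact ⟨h, hP, EReal.coe_lt_coe_iff.1 hQ⟩

variable {RP RQ : H → ℝ} {ε₁ ε₂ : ℝ}

lemma coe_excess_le_smod {h : H} (hQ : h ∈ cset RQ ε₁)
    (hP : excessOn RP (cset RQ ε₁) h ≤ ε₂) : (excess RQ h : EReal) ≤ smod RP RQ ε₁ ε₂ :=
  le_sSup ⟨h, ⟨hQ, hP⟩, rfl⟩

lemma coe_excess_le_smod_of_excess_le (hRP : BddBelow (Set.range RP)) {h : H}
    (hQ : excess RQ h ≤ ε₁) (hP : excess RP h ≤ ε₂) : (excess RQ h : EReal) ≤ smod RP RQ ε₁ ε₂ :=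
  coe_excess_le_smod hQ ((excessOn_le_excess hRP ⟨h, hQ⟩ h).trans hP)

lemma coe_le_mul_smod {C x : ℝ} (hC : 0 ≤ C) {h : H} (hQ : h ∈ cset RQ ε₁)
    (hP : excessOn RP (cset RQ ε₁) h ≤ ε₂) (hx : x ≤ C * excess RQ h) :
    (x : EReal) ≤ C * smod RP RQ ε₁ ε₂ :=
  calc (x : EReal) ≤ ((C * excess RQ h : ℝ) : EReal) := EReal.coe_le_coe_iff.2 hx
    _ = C * excess RQ h := EReal.coe_mul _ _
    _ ≤ C * smod RP RQ ε₁ ε₂ :=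
      mul_le_mul_of_nonneg_left (coe_excess_le_smod hQ hP) (EReal.coe_nonneg.2 hC)

lemma coe_excess_le_smod_of_pivot_lt (hRP : BddBelow (Set.range RP)) {ε η : ℝ}
    {HS HP : Set H} (hpiv : pivot RP RQ < ε₁) (hη : 0 < η) (hPη : cset RP η ⊆ HP)
    (hPε : HP ⊆ cset RP ε₂) (hS : cset RQ ε ⊆ HS) (hdisj : ¬ (HS ∩ HP).Nonempty) {h : H}
    (hh : excess RQ h ≤ ε) : (excess RQ h : EReal) ≤ smod RP RQ ε₁ ε₂ := by
  obtain ⟨h₀, hP₀, hQ₀⟩ := exists_excess_le_excess_lt_of_pivot_lt hpiv hη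
  have hS₀ : h₀ ∉ HS := fun hS₀ => hdisj ⟨h₀, hS₀, hPη hP₀⟩
  have hle : excess RQ h ≤ excess RQ h₀ := hh.trans (le_of_not_ge fun hle => hS₀ (hS hle))
  exact (EReal.coe_le_coe_iff.2 hle).trans
    (coe_excess_le_smod_of_excess_le hRP hQ₀.le (hPε (hPη hP₀)))

lemma coe_excess_le_mul_smod_of_excessOn_le (hRP : BddBelow (Set.range RP))
    (hRQ : BddBelow (Set.range RQ)) {C : ℝ} (hC : 1 ≤ C) (hε₂ : 0 < ε₂) {S : Set H}
    (hS : cset RQ (ε₁ / C) ⊆ S ∧ S ⊆ cset RQ ε₁) {h : H} (hmem : h ∈ S)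
    (hrate : excessOn RP S h ≤ ε₂) : (excess RQ h : EReal) ≤ C * smod RP RQ ε₁ ε₂ := by
  have hC₀ : 0 < C := zero_lt_one.trans_le hC
  rcases excessOn_le_or_exists_notMem_excessOn_le (hRP.mono (Set.image_subset_range _ _))
      hS.2 hmem hrate hε₂ with hself | ⟨h₀, hQ₀, hS₀, hP₀⟩
  · exact coe_le_mul_smod hC₀.le (hS.2 hmem) hself (le_mul_of_one_le_left (excess_nonneg hRQ h) hC)
  refine coe_le_mul_smod hC₀.le hQ₀ hP₀ ?_
  have hlt : ε₁ / C < excess RQ h₀ := lt_of_not_ge fun hle => hS₀ (hS.1 hle)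
  calc excess RQ h ≤ ε₁ := hS.2 hmem
    _ = C * (ε₁ / C) := (mul_div_cancel₀ ε₁ hC₀.ne').symm
    _ ≤ C * excess RQ h₀ := mul_le_mul_of_nonneg_left hlt.le hC₀.le

end Transfer

theorem strong_adaptive_transfer_general {H : Type*} (RP RQ : H → ℝ)
    (hRP : ∀ h, 0 ≤ RP h) (hRQ : ∀ h, 0 ≤ RQ h)
    (εQ εP εtildeP Csharp Cflat : ℝ)
    (hεt : 0 < εtildeP)
    (hCf : 1 < Cflat)
    (HQsharp HQflat HPhat : Set H)
    -- (ε_Q, τ, C♯)-strong confidence set event: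
    (hQs : cset RQ (εQ / Csharp) ⊆ HQsharp ∧ HQsharp ⊆ cset RQ εQ)
    -- (ε_Q/C♯, τ, C♭)-strong confidence set event:
    (hQf : cset RQ (εQ / Csharp / Cflat) ⊆ HQflat ∧ HQflat ⊆ cset RQ (εQ / Csharp))
    -- (ε_P, τ)-weak confidence set event:
    (hPerm : H)
    (hPi : ∃ εhatP : ℝ, 0 < εhatP ∧ excess RP hPerm < εhatP ∧ cset RP εhatP ⊆ HPhat)
    (hPii : HPhat ⊆ cset RP εP)
    -- ERM over `Ĥ_Q^♭` under `P`, and the event that its local excess `P`-risk is ≤ ε̃_P: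
    (hPQerm : H) (hPQmem : hPQerm ∈ HQflat)
    (hPQrate : excessOn RP HQflat hPQerm ≤ εtildeP)
    -- the algorithm's output:
    (hhat : H)
    (halg : ((HQsharp ∩ HPhat).Nonempty → hhat ∈ HQsharp ∩ HPhat)
      ∧ (¬ (HQsharp ∩ HPhat).Nonempty → hhat = hPQerm)) :
    (((pivot RP RQ < (εQ : EReal)) ∨ (HQsharp ∩ HPhat).Nonempty) →
        (excess RQ hhat : EReal) ≤ smod RP RQ εQ εP)
    ∧ ((¬ ((pivot RP RQ < (εQ : EReal)) ∨ (HQsharp ∩ HPhat).Nonempty)) →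
        (excess RQ hhat : EReal) ≤
          ((Cflat : ℝ) : EReal) * smod RP RQ (εQ / Csharp) εtildeP) := by
  obtain ⟨εhatP, hεhat, -, hPsub⟩ := hPi
  have hbddP : BddBelow (Set.range RP) := ⟨0, Set.forall_mem_range.2 hRP⟩
  have hbddQ : BddBelow (Set.range RQ) := ⟨0, Set.forall_mem_range.2 hRQ⟩
  refine ⟨fun hcase => ?_, fun hcase => ?_⟩
  · by_cases hne : (HQsharp ∩ HPhat).Nonempty
    · obtain ⟨hQ, hP⟩ := halg.1 hne
      exact coe_excess_le_smod_of_excess_le hbddP (hQs.2 hQ) (hPii hP)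
    · rw [halg.2 hne]
      exact coe_excess_le_smod_of_pivot_lt hbddP (hcase.resolve_right hne) hεhat hPsub hPii
        hQs.1 hne (hQf.2 hPQmem)
  · rw [halg.2 fun hne => hcase (Or.inr hne)]
    exact coe_excess_le_mul_smod_of_excessOn_le hbddP hbddQ hCf.le hεt hQf hPQmem hPQrate

/-- deterministic core of Theorem `double-delta`: on the intersection of
the strong/weak confidence-set events and the local ERM event, the output `ĥ` of
Algorithm 2 satisfies `E_Q(ĥ) ≤ δ(ε_Q, ε_P)` when `ε_Q > ε_{P,Q}` or the intersection
is nonempty, and `E_Q(ĥ) ≤ C♭ · δ(ε_Q/C♯, ε̃_P)` otherwise. -/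
theorem strong_adaptive_transfer {H : Type*} [Nonempty H] (RP RQ : H → ℝ)
    (hRP : ∀ h, 0 ≤ RP h) (hRQ : ∀ h, 0 ≤ RQ h)
    (εQ εP εtildeP Csharp Cflat : ℝ)
    (hεQ : 0 < εQ) (hεP : 0 < εP) (hεt : 0 < εtildeP)
    (hCs : 1 < Csharp) (hCf : 1 < Cflat)
    (HQsharp HQflat HPhat : Set H) (hsub : HQflat ⊆ HQsharp)
    -- (ε_Q, τ, C♯)-strong confidence set event:
    (hQs : cset RQ (εQ / Csharp) ⊆ HQsharp ∧ HQsharp ⊆ cset RQ εQ)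
    -- (ε_Q/C♯, τ, C♭)-strong confidence set event:
    (hQf : cset RQ (εQ / Csharp / Cflat) ⊆ HQflat ∧ HQflat ⊆ cset RQ (εQ / Csharp))
    -- (ε_P, τ)-weak confidence set event:
    (hPerm : H)
    (hPi : ∃ εhatP : ℝ, 0 < εhatP ∧ excess RP hPerm < εhatP ∧ cset RP εhatP ⊆ HPhat)
    (hPii : HPhat ⊆ cset RP εP)
    -- ERM over `Ĥ_Q^♭` under `P`, and the event that its local excess `P`-risk is ≤ ε̃_P:
    (hPQerm : H) (hPQmem : hPQerm ∈ HQflat)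
    (hPQrate : excessOn RP HQflat hPQerm ≤ εtildeP)
    -- the algorithm's output:
    (hhat : H)
    (halg : ((HQsharp ∩ HPhat).Nonempty → hhat ∈ HQsharp ∩ HPhat)
      ∧ (¬ (HQsharp ∩ HPhat).Nonempty → hhat = hPQerm)) :
    (((pivot RP RQ < (εQ : EReal)) ∨ (HQsharp ∩ HPhat).Nonempty) →
        (excess RQ hhat : EReal) ≤ smod RP RQ εQ εP)
    ∧ ((¬ ((pivot RP RQ < (εQ : EReal)) ∨ (HQsharp ∩ HPhat).Nonempty)) →
        (excess RQ hhat : EReal) ≤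
          ((Cflat : ℝ) : EReal) * smod RP RQ (εQ / Csharp) εtildeP) :=
  strong_adaptive_transfer_general RP RQ hRP hRQ εQ εP εtildeP Csharp Cflat hεt hCf HQsharp HQflat
    HPhat hQs hQf hPerm hPi hPii hPQerm hPQmem hPQrate hhat halg
end

section
/- Let α = √{α'_μ(τ)} and assume uniform convergence: for all h ∈ H, |R̂_μ(h) - R_μ(h)| ≤ (C/6)·α. Then the set Ĥ_μ = {h ∈ H : R̂_μ(h) - inf_{h'∈H} R̂_μ(h') ≤ Cα} satisfies H_μ((4/3)Cα / 2) ⊂ Ĥ_μ ⊂ H_μ((4/3)Cα); that is, Ĥ_μ is a ((4/3)Cα, τ, 2)-strong confidence set. -/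
/-- deterministic core of the `√n` strong confidence set: if
`|R̂(h) - R(h)| ≤ (C/6)·a` uniformly over `H` (with `a = √(α'_μ(τ))`), then
`Ĥ = {h : R̂(h) - inf R̂ ≤ C·a}` satisfies
`H_μ((4/3)C·a / 2) ⊆ Ĥ ⊆ H_μ((4/3)C·a)`, i.e. it is an
`((4/3)C·a, τ, 2)`-strong confidence set. -/
theorem sqrt_n_strong_confidence_set {H : Type*} [Nonempty H]
    (R Rhat : H → ℝ) (hR : ∀ h, 0 ≤ R h) (hRhat : ∀ h, 0 ≤ Rhat h)
    (C a : ℝ) (hC : 0 < C) (ha : 0 ≤ a)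
    (hunif : ∀ h, |Rhat h - R h| ≤ C / 6 * a) :
    cset R ((4 / 3) * C * a / 2) ⊆ {h | Rhat h - sInf (Set.range Rhat) ≤ C * a}
      ∧ {h | Rhat h - sInf (Set.range Rhat) ≤ C * a} ⊆ cset R ((4 / 3) * C * a) := by
  have hbR : BddBelow (Set.range R) := ⟨0, by rintro _ ⟨h, rfl⟩; exact hR h⟩
  have hbRh : BddBelow (Set.range Rhat) := ⟨0, by rintro _ ⟨h, rfl⟩; exact hRhat h⟩
  have hne : (Set.range R).Nonempty := Set.range_nonempty R
  have hneh : (Set.range Rhat).Nonempty := Set.range_nonempty Rhat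
  have habs : ∀ h, R h - C / 6 * a ≤ Rhat h ∧ Rhat h - C / 6 * a ≤ R h := by
    intro h
    have := abs_le.mp (hunif h)
    constructor <;> linarith [this.1, this.2]
  have h1 : sInf (Set.range R) - C / 6 * a ≤ sInf (Set.range Rhat) := by
    apply le_csInf hneh
    rintro _ ⟨h, rfl⟩
    have := (habs h).1
    have := csInf_le hbR (Set.mem_range_self (f := R) h)
    linarith
  have h2 : sInf (Set.range Rhat) - C / 6 * a ≤ sInf (Set.range R) := by
    apply le_csInf hne
    rintro _ ⟨h, rfl⟩
    have := (habs h).2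
    have := csInf_le hbRh (Set.mem_range_self (f := Rhat) h)
    linarith
  constructor
  · intro h hh
    simp only [cset, excess, Set.mem_setOf_eq] at hh ⊢
    have := (habs h).2
    linarith
  · intro h hh
    simp only [cset, excess, Set.mem_setOf_eq] at hh ⊢
    have := (habs h).1
    linarith
end
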